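/- Let m ≥ 1 and n = 4m. Writing a quaternionic matrix as A + iB + jC + kD with real m×m matrices A, B, C, D, define φ(A + iB + jC + kD) to be the 4m×4m real matrix with m×m block rows (A, C, B, D), (−C, A, D, −B), (−B, −D, A, C), (−D, B, −C, A). Then φ is an injective group homomorphism from Sp(m) into O(4m), and the centralizer of H₂' = ⟨[J_{2m}], [K_m]⟩ in O(4m)/⟨−I⟩ equals {[φ(Y)·Z] : Y ∈ Sp(m), Z ∈ ⟨J_{2m}, K_m⟩}; that is, it is the internal product φ(Sp(m)/⟨−I⟩) × H₂'. -/

import Mathlib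

open Matrix

noncomputable section

/-- The orthogonal group `O(ι)` of real orthogonal matrices indexed by `ι`. -/
abbrev OG (ι : Type) [Fintype ι] [DecidableEq ι] := Matrix.orthogonalGroup ι ℝ

variable (ι : Type) [Fintype ι] [DecidableEq ι]

/-- `-I` as an element of the orthogonal group. -/
def negOne : OG ι := ⟨(-1 : Matrix ι ι ℝ), by
  rw [Matrix.mem_unitaryGroup_iff]; simp⟩

/-- The central subgroup `⟨-I⟩` of the orthogonal group. -/
def negSG : Subgroup (OG ι) := Subgroup.zpowers (negOne ι)

instance negSG_normal : (negSG ι).Normal := by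
  constructor
  intro x hx g
  obtain ⟨k, rfl⟩ := Subgroup.mem_zpowers_iff.mp hx
  have h2 : (g : Matrix ι ι ℝ) * ((g⁻¹ : OG ι) : Matrix ι ι ℝ) = 1 := by
    have := Matrix.UnitaryGroup.mul_val g g⁻¹
    rw [mul_inv_cancel] at this
    simpa using this.symm
  have hg : g * negOne ι * g⁻¹ = negOne ι := by
    apply Subtype.ext
    show (g : Matrix ι ι ℝ) * ((negOne ι : OG ι) : Matrix ι ι ℝ)
        * ((g⁻¹ : OG ι) : Matrix ι ι ℝ) = ((negOne ι : OG ι) : Matrix ι ι ℝ)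
    have hneg : ((negOne ι : OG ι) : Matrix ι ι ℝ) = -1 := rfl
    rw [hneg]
    calc (g : Matrix ι ι ℝ) * (-1 : Matrix ι ι ℝ) * ((g⁻¹ : OG ι) : Matrix ι ι ℝ)
        = -((g : Matrix ι ι ℝ) * ((g⁻¹ : OG ι) : Matrix ι ι ℝ)) := by rw [mul_neg, mul_one, neg_mul]
      _ = -1 := by rw [h2]
  have hmap : g * (negOne ι) ^ k * g⁻¹ = (g * negOne ι * g⁻¹) ^ k := by
    have := map_zpow (MulAut.conj g) (negOne ι) k
    simpa [MulAut.conj_apply] using this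
  rw [hmap, hg]
  exact Subgroup.zpow_mem _ (Subgroup.mem_zpowers _) k

/-- The projective orthogonal group `O(ι)/⟨-I⟩`. -/
abbrev PO := OG ι ⧸ negSG ι

/-- The table of real components for the regular representation of quaternionic matrices:
for `X = A + iB + jC + kD`, the 4×4 block pattern is
`(A, C, B, D), (-C, A, D, -B), (-B, -D, A, C), (-D, B, -C, A)`. -/
def phiTbl : Fin 4 → Fin 4 → Quaternion ℝ → ℝ :=
  ![![fun x => x.re,    fun x => x.imJ,   fun x => x.imI,  fun x => x.imK],
    ![fun x => -x.imJ,  fun x => x.re,    fun x => x.imK,  fun x => -x.imI],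
    ![fun x => -x.imI,  fun x => -x.imK,  fun x => x.re,   fun x => x.imJ],
    ![fun x => -x.imK,  fun x => x.imI,   fun x => -x.imJ, fun x => x.re]]

/-- The realification `φ` of a quaternionic `m × m` matrix, a real `4m × 4m` matrix. -/
def phi (m : ℕ) (X : Matrix (Fin m) (Fin m) (Quaternion ℝ)) :
    Matrix (Fin 4 × Fin m) (Fin 4 × Fin m) ℝ :=
  Matrix.of fun p q => phiTbl p.1 q.1 (X p.2 q.2)

/-- The block pattern of `J_{2m} = [[0, I_{2m}], [-I_{2m}, 0]]` in `m × m` blocks of a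
`4m × 4m` matrix. -/
def Jtbl : Fin 4 → Fin 4 → ℝ :=
  ![![0, 0, 1, 0], ![0, 0, 0, 1], ![-1, 0, 0, 0], ![0, -1, 0, 0]]

/-- The block pattern of `K_m`. -/
def Ktbl : Fin 4 → Fin 4 → ℝ :=
  ![![0, 0, 0, 1], ![0, 0, -1, 0], ![0, 1, 0, 0], ![-1, 0, 0, 0]]

/-- `J_{2m}` as a real `4m × 4m` matrix. -/
def Jmat (m : ℕ) : Matrix (Fin 4 × Fin m) (Fin 4 × Fin m) ℝ :=
  Matrix.of fun p q => if p.2 = q.2 then Jtbl p.1 q.1 else 0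

/-- `K_m` as a real `4m × 4m` matrix. -/
def Kmat (m : ℕ) : Matrix (Fin 4 × Fin m) (Fin 4 × Fin m) ℝ :=
  Matrix.of fun p q => if p.2 = q.2 then Ktbl p.1 q.1 else 0

/-- The subgroup `H₂' = ⟨[J_{2m}], [K_m]⟩` of `O(4m)/⟨-I⟩`. -/
def H2' (m : ℕ) : Subgroup (PO (Fin 4 × Fin m)) :=
  Subgroup.closure {x | ∃ U : OG (Fin 4 × Fin m),
    (QuotientGroup.mk U : PO (Fin 4 × Fin m)) = x ∧
    ((U : Matrix (Fin 4 × Fin m) (Fin 4 × Fin m) ℝ) = Jmat m ∨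
     (U : Matrix (Fin 4 × Fin m) (Fin 4 × Fin m) ℝ) = Kmat m)}

/-!
Identify `ℝ⁴` with `ℍ` through the basis `(1, j, i, k)`. The `4 × 4` block pattern of `φ` at `x`
is then the matrix of `v ↦ v * star x`, while `J` and `K` act on every block as left
multiplication by `-i` and `-k`. Left and right multiplications commute, and as `i` and `k`
generate `ℍ`, the real matrices commuting with both `J` and `K` are exactly the `φ(Y)`; such a
matrix is orthogonal iff `Y` is symplectic.

A class `[U]` commutes with `[J]` and `[K]` iff `U J = ± J U` and `U K = ± K U`. Since
`J² = K² = -1` and `J K = -K J`, one of `1, J, K, J K` shows the same pair of signs, and dividing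
`U` by it leaves a matrix commuting with `J` and `K` on the nose.
-/

section SignCommute

variable {R : Type*} [Ring R]

def SignCommute (s : ℤˣ) (a b : R) : Prop := a * b = s • (b * a)

theorem signCommute_one_iff {a b : R} : SignCommute 1 a b ↔ Commute a b := by
  rw [SignCommute, one_smul]; rfl

theorem signCommute_neg_one_iff {a b : R} : SignCommute (-1) a b ↔ a * b = -(b * a) := by
  rw [SignCommute, Units.neg_smul, one_smul]

theorem SignCommute.mul_left {s t : ℤˣ} {a b c : R} (ha : SignCommute s a c)
    (hb : SignCommute t b c) : SignCommute (s * t) (a * b) c := by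
  unfold SignCommute at *
  rw [mul_assoc, hb, mul_smul_comm, ← mul_assoc, ha, smul_mul_assoc, mul_assoc, smul_smul,
    mul_comm]

theorem SignCommute.neg_left {s : ℤˣ} {a b : R} (h : SignCommute s a b) :
    SignCommute s (-a) b := by
  unfold SignCommute at *
  rw [neg_mul, mul_neg, smul_neg, h]

theorem SignCommute.commute_mul {s : ℤˣ} {a b c : R} (ha : SignCommute s a c)
    (hb : SignCommute s b c) : Commute (a * b) c := by
  simpa only [Int.units_mul_self, signCommute_one_iff] using ha.mul_left hb

theorem SignCommute.exists_of_mem_closure {S : Set R} {c z : R}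
    (hS : ∀ a ∈ S, ∃ s : ℤˣ, SignCommute s a c) (hz : z ∈ Submonoid.closure S) :
    ∃ s : ℤˣ, SignCommute s z c := by
  induction hz using Submonoid.closure_induction with
  | mem a ha => exact hS a ha
  | one => exact ⟨1, signCommute_one_iff.2 (Commute.one_left c)⟩
  | mul a b _ _ ha hb =>
    obtain ⟨s, hs⟩ := ha
    obtain ⟨t, ht⟩ := hb
    exact ⟨s * t, hs.mul_left ht⟩

variable {j k : R}

theorem exists_mem_closure_signCommute_leftInverse (hj : j * j = -1) (hk : k * k = -1)
    (hjk : j * k = -(k * j)) (s t : ℤˣ) :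
    ∃ z ∈ Submonoid.closure {j, k},
      ∃ z', z' * z = 1 ∧ SignCommute s z' j ∧ SignCommute t z' k := by
  have hjj : SignCommute 1 j j := signCommute_one_iff.2 (Commute.refl j)
  have hkk : SignCommute 1 k k := signCommute_one_iff.2 (Commute.refl k)
  have hjk' : SignCommute (-1) j k := signCommute_neg_one_iff.2 hjk
  have hkj : SignCommute (-1) k j := signCommute_neg_one_iff.2 (by rw [hjk, neg_neg])
  have hj_mem : j ∈ Submonoid.closure {j, k} := Submonoid.subset_closure (by simp)
  have hk_mem : k ∈ Submonoid.closure {j, k} := Submonoid.subset_closure (by simp)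
  rcases Int.units_eq_one_or s with rfl | rfl <;> rcases Int.units_eq_one_or t with rfl | rfl
  · exact ⟨1, one_mem _, 1, one_mul 1, signCommute_one_iff.2 (Commute.one_left j),
      signCommute_one_iff.2 (Commute.one_left k)⟩
  · exact ⟨j, hj_mem, -j, by rw [neg_mul, hj, neg_neg], hjj.neg_left, hjk'.neg_left⟩
  · exact ⟨k, hk_mem, -k, by rw [neg_mul, hk, neg_neg], hkj.neg_left, hkk.neg_left⟩
  · refine ⟨j * k, mul_mem hj_mem hk_mem, -(j * k), ?_, (hjj.mul_left hkj).neg_left,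
      (hjk'.mul_left hkk).neg_left⟩
    calc -(j * k) * (j * k) = -(j * (k * j) * k) := by noncomm_ring
      _ = j * j * (k * k) := by rw [← neg_neg (k * j), ← hjk]; noncomm_ring
      _ = 1 := by rw [hj, hk, neg_one_mul, neg_neg]

theorem exists_eq_mul_of_signCommute {u : R} (hj : j * j = -1) (hk : k * k = -1)
    (hjk : j * k = -(k * j)) {s t : ℤˣ} (hu_j : SignCommute s u j) (hu_k : SignCommute t u k) :
    ∃ w, ∃ z ∈ Submonoid.closure {j, k}, u = w * z ∧ Commute w j ∧ Commute w k := by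
  obtain ⟨z, hz, z', hz'z, hz'j, hz'k⟩ :=
    exists_mem_closure_signCommute_leftInverse hj hk hjk s t
  exact ⟨u * z', z, hz, by rw [mul_assoc, hz'z, mul_one], hu_j.commute_mul hz'j,
    hu_k.commute_mul hz'k⟩

end SignCommute

section Projective

variable {ι}

theorem mem_negSG_iff {x : OG ι} : x ∈ negSG ι ↔ x = 1 ∨ x = negOne ι := by
  have h2 : negOne ι ^ 2 = 1 := Subtype.ext (by simp [negOne, sq])
  constructor
  · rintro ⟨k, rfl⟩
    rcases Int.even_or_odd' k with ⟨n, rfl | rfl⟩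
    · simp [_root_.zpow_mul, h2]
    · simp [_root_.zpow_add, _root_.zpow_mul, h2]
  · rintro (rfl | rfl)
    exacts [one_mem _, Subgroup.mem_zpowers _]

namespace PO

theorem mk_eq_mk_iff {U V : OG ι} :
    (QuotientGroup.mk U : PO ι) = QuotientGroup.mk V ↔
      ∃ s : ℤˣ, (U : Matrix ι ι ℝ) = s • (V : Matrix ι ι ℝ) := by
  rw [QuotientGroup.eq_iff_div_mem, mem_negSG_iff, div_eq_one, div_eq_iff_eq_mul,
    Subtype.ext_iff, Subtype.ext_iff]
  constructor
  · rintro (h | h)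
    · exact ⟨1, by rw [h, one_smul]⟩
    · exact ⟨-1, by rw [h]; simp [negOne]⟩
  · rintro ⟨s, h⟩
    rcases Int.units_eq_one_or s with rfl | rfl
    · exact Or.inl (by rw [h, one_smul])
    · exact Or.inr (by rw [h]; simp [negOne])

theorem commute_mk_iff {U V : OG ι} :
    Commute (QuotientGroup.mk U : PO ι) (QuotientGroup.mk V) ↔
      ∃ s : ℤˣ, SignCommute s (U : Matrix ι ι ℝ) V := by
  rw [Commute, SemiconjBy, ← QuotientGroup.mk_mul, ← QuotientGroup.mk_mul, mk_eq_mk_iff]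
  rfl

end PO

end Projective

def quatToMatrix : Quaternion ℝ →+* Matrix (Fin 4) (Fin 4) ℝ where
  toFun x := of fun a b => phiTbl a b x
  map_one' := by
    ext a b; fin_cases a <;> fin_cases b <;>
      simp [phiTbl, Quaternion.re_one, Quaternion.imI_one, Quaternion.imJ_one, Quaternion.imK_one]
  map_mul' x y := by
    ext a c
    fin_cases a <;> fin_cases c <;>
      simp [phiTbl, mul_apply, Fin.sum_univ_four] <;> ring
  map_zero' := by
    ext a b; fin_cases a <;> fin_cases b <;>
      simp [phiTbl, Quaternion.re_zero, Quaternion.imI_zero, Quaternion.imJ_zero,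
        Quaternion.imK_zero]
  map_add' x y := by
    ext a b; fin_cases a <;> fin_cases b <;> simp [phiTbl] <;> ring

theorem quatToMatrix_injective : Function.Injective quatToMatrix := fun x y h =>
  Quaternion.ext x y (congrFun₂ h 0 0) (congrFun₂ h 0 2) (congrFun₂ h 0 1) (congrFun₂ h 0 3)

theorem quatToMatrix_star (x : Quaternion ℝ) : quatToMatrix (star x) = (quatToMatrix x)ᵀ := by
  ext a b; fin_cases a <;> fin_cases b <;> simp [quatToMatrix, phiTbl]

theorem Jtbl_mem_orthogonalGroup : of Jtbl ∈ orthogonalGroup (Fin 4) ℝ := by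
  rw [mem_orthogonalGroup_iff]
  ext a b; fin_cases a <;> fin_cases b <;> simp [Jtbl, mul_apply, Fin.sum_univ_four]

theorem Ktbl_mem_orthogonalGroup : of Ktbl ∈ orthogonalGroup (Fin 4) ℝ := by
  rw [mem_orthogonalGroup_iff]
  ext a b; fin_cases a <;> fin_cases b <;> simp [Ktbl, mul_apply, Fin.sum_univ_four]

theorem Jtbl_mul_self : of Jtbl * of Jtbl = -1 := by
  ext a b; fin_cases a <;> fin_cases b <;> simp [Jtbl, mul_apply, Fin.sum_univ_four]

theorem Ktbl_mul_self : of Ktbl * of Ktbl = -1 := by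
  ext a b; fin_cases a <;> fin_cases b <;> simp [Ktbl, mul_apply, Fin.sum_univ_four]

theorem Jtbl_mul_Ktbl : of Jtbl * of Ktbl = -(of Ktbl * of Jtbl) := by
  ext a b; fin_cases a <;> fin_cases b <;> simp [Jtbl, Ktbl, mul_apply, Fin.sum_univ_four]

theorem commute_quatToMatrix_Jtbl (x : Quaternion ℝ) : Commute (quatToMatrix x) (of Jtbl) := by
  ext a c
  fin_cases a <;> fin_cases c <;> simp [quatToMatrix, phiTbl, Jtbl, mul_apply, Fin.sum_univ_four]

theorem commute_quatToMatrix_Ktbl (x : Quaternion ℝ) : Commute (quatToMatrix x) (of Ktbl) := by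
  ext a c
  fin_cases a <;> fin_cases c <;> simp [quatToMatrix, phiTbl, Ktbl, mul_apply, Fin.sum_univ_four]

theorem eq_quatToMatrix_of_commute {M : Matrix (Fin 4) (Fin 4) ℝ}
    (hJ : Commute M (of Jtbl)) (hK : Commute M (of Ktbl)) :
    M = quatToMatrix ⟨M 0 0, M 0 2, M 0 1, M 0 3⟩ := by
  have hJ' := congrFun₂ hJ.eq
  have hK' := congrFun₂ hK.eq
  simp [Jtbl, Ktbl, mul_apply, Fin.sum_univ_four, Fin.forall_fin_succ] at hJ' hK'
  ext a b
  fin_cases a <;> fin_cases b <;> simp [quatToMatrix, phiTbl] <;> linarith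

variable {m : ℕ}

/-- Regrouping a `4m × 4m` matrix as an `m × m` matrix of `4 × 4` blocks makes `phi` the entrywise
`quatToMatrix` and `Jmat`, `Kmat` scalar matrices. -/
def blockEquiv (m : ℕ) :
    Matrix (Fin m) (Fin m) (Matrix (Fin 4) (Fin 4) ℝ) ≃+*
      Matrix (Fin 4 × Fin m) (Fin 4 × Fin m) ℝ :=
  (compRingEquiv (Fin m) (Fin 4) ℝ).trans
    (reindexAlgEquiv ℝ ℝ (Equiv.prodComm _ _)).toRingEquiv

theorem blockEquiv_apply (M : Matrix (Fin m) (Fin m) (Matrix (Fin 4) (Fin 4) ℝ))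
    (a b : Fin 4) (i j : Fin m) :
    blockEquiv m M (a, i) (b, j) = M i j a b := rfl

theorem phi_eq_blockEquiv (X : Matrix (Fin m) (Fin m) (Quaternion ℝ)) :
    phi m X = blockEquiv m (X.map quatToMatrix) := rfl

theorem phi_mul (X Y : Matrix (Fin m) (Fin m) (Quaternion ℝ)) :
    phi m (X * Y) = phi m X * phi m Y := by
  simp only [phi_eq_blockEquiv, ← map_mul, ← RingHom.mapMatrix_apply]

theorem phi_one : phi m 1 = 1 := by
  simp only [phi_eq_blockEquiv, ← RingHom.mapMatrix_apply, map_one]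

theorem phi_injective : Function.Injective (phi m) := fun _ _ h =>
  Matrix.map_injective quatToMatrix_injective ((blockEquiv m).injective h)

theorem phi_star (X : Matrix (Fin m) (Fin m) (Quaternion ℝ)) :
    phi m (star X) = star (phi m X) := by
  ext ⟨a, i⟩ ⟨b, j⟩
  simp [phi_eq_blockEquiv, blockEquiv_apply, quatToMatrix_star]

theorem phi_mem_orthogonalGroup_iff {X : Matrix (Fin m) (Fin m) (Quaternion ℝ)} :
    phi m X ∈ orthogonalGroup (Fin 4 × Fin m) ℝ ↔
      X ∈ unitary (Matrix (Fin m) (Fin m) (Quaternion ℝ)) := by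
  simp only [orthogonalGroup, unitaryGroup, Unitary.mem_iff, ← phi_star, ← phi_mul, ← phi_one,
    phi_injective.eq_iff]

theorem blockEquiv_scalar (T : Matrix (Fin 4) (Fin 4) ℝ) :
    blockEquiv m (scalar (Fin m) T) = of fun p q => if p.2 = q.2 then T p.1 q.1 else 0 := by
  ext ⟨a, i⟩ ⟨b, j⟩
  by_cases h : i = j <;> simp [blockEquiv_apply, h]

theorem transpose_blockEquiv_scalar (T : Matrix (Fin 4) (Fin 4) ℝ) :
    (blockEquiv m (scalar (Fin m) T))ᵀ = blockEquiv m (scalar (Fin m) Tᵀ) := by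
  ext ⟨a, i⟩ ⟨b, j⟩
  by_cases h : i = j <;> simp [blockEquiv_apply, h, eq_comm]

theorem blockEquiv_scalar_mem_orthogonalGroup {T : Matrix (Fin 4) (Fin 4) ℝ}
    (hT : T ∈ orthogonalGroup (Fin 4) ℝ) :
    blockEquiv m (scalar (Fin m) T) ∈ orthogonalGroup (Fin 4 × Fin m) ℝ := by
  rw [mem_orthogonalGroup_iff] at hT ⊢
  rw [transpose_blockEquiv_scalar, ← map_mul, ← map_mul, hT, map_one, map_one]

theorem commute_blockEquiv_scalar_iff {W : Matrix (Fin 4 × Fin m) (Fin 4 × Fin m) ℝ}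
    {T : Matrix (Fin 4) (Fin 4) ℝ} :
    Commute W (blockEquiv m (scalar (Fin m) T)) ↔
      ∀ i j, Commute ((blockEquiv m).symm W i j) T := by
  obtain ⟨M, rfl⟩ := (blockEquiv m).surjective W
  rw [commute_map_iff (blockEquiv m).injective, RingEquiv.symm_apply_apply, Commute.symm_iff,
    scalar_commute_iff, ← Matrix.ext_iff]
  simp only [Matrix.smul_apply, smul_eq_mul, op_smul_eq_mul]
  exact forall₂_congr fun i j => eq_comm

theorem Jmat_eq_blockEquiv : Jmat m = blockEquiv m (scalar (Fin m) (of Jtbl)) :=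
  (blockEquiv_scalar _).symm

theorem Kmat_eq_blockEquiv : Kmat m = blockEquiv m (scalar (Fin m) (of Ktbl)) :=
  (blockEquiv_scalar _).symm

theorem Jmat_mem_orthogonalGroup : Jmat m ∈ orthogonalGroup (Fin 4 × Fin m) ℝ :=
  Jmat_eq_blockEquiv ▸ blockEquiv_scalar_mem_orthogonalGroup Jtbl_mem_orthogonalGroup

theorem Kmat_mem_orthogonalGroup : Kmat m ∈ orthogonalGroup (Fin 4 × Fin m) ℝ :=
  Kmat_eq_blockEquiv ▸ blockEquiv_scalar_mem_orthogonalGroup Ktbl_mem_orthogonalGroup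

theorem Jmat_mul_self : Jmat m * Jmat m = -1 := by
  simp only [Jmat_eq_blockEquiv, ← map_mul, Jtbl_mul_self, map_neg, map_one]

theorem Kmat_mul_self : Kmat m * Kmat m = -1 := by
  simp only [Kmat_eq_blockEquiv, ← map_mul, Ktbl_mul_self, map_neg, map_one]

theorem Jmat_mul_Kmat : Jmat m * Kmat m = -(Kmat m * Jmat m) := by
  simp only [Jmat_eq_blockEquiv, Kmat_eq_blockEquiv, ← map_mul, Jtbl_mul_Ktbl, map_neg]

theorem closure_Jmat_Kmat_le_orthogonalGroup :
    Submonoid.closure {Jmat m, Kmat m} ≤ orthogonalGroup (Fin 4 × Fin m) ℝ := by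
  rw [Submonoid.closure_le, Set.insert_subset_iff, Set.singleton_subset_iff]
  exact ⟨Jmat_mem_orthogonalGroup, Kmat_mem_orthogonalGroup⟩

theorem phi_commute_Jmat (X : Matrix (Fin m) (Fin m) (Quaternion ℝ)) :
    Commute (phi m X) (Jmat m) := by
  rw [Jmat_eq_blockEquiv, commute_blockEquiv_scalar_iff]
  exact fun i j => commute_quatToMatrix_Jtbl (X i j)

theorem phi_commute_Kmat (X : Matrix (Fin m) (Fin m) (Quaternion ℝ)) :
    Commute (phi m X) (Kmat m) := by
  rw [Kmat_eq_blockEquiv, commute_blockEquiv_scalar_iff]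
  exact fun i j => commute_quatToMatrix_Ktbl (X i j)

theorem exists_phi_eq_of_commute {W : Matrix (Fin 4 × Fin m) (Fin 4 × Fin m) ℝ}
    (hJ : Commute W (Jmat m)) (hK : Commute W (Kmat m)) : ∃ X, phi m X = W := by
  rw [Jmat_eq_blockEquiv, commute_blockEquiv_scalar_iff] at hJ
  rw [Kmat_eq_blockEquiv, commute_blockEquiv_scalar_iff] at hK
  set M := (blockEquiv m).symm W
  refine ⟨of fun i j => ⟨M i j 0 0, M i j 0 2, M i j 0 1, M i j 0 3⟩, ?_⟩
  rw [phi_eq_blockEquiv, ← (blockEquiv m).apply_symm_apply W]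
  congr 1
  ext1 i j
  exact (eq_quatToMatrix_of_commute (hJ i j) (hK i j)).symm

theorem signCommute_Jmat_Kmat_iff {U : Matrix (Fin 4 × Fin m) (Fin 4 × Fin m) ℝ}
    (hU : U ∈ orthogonalGroup (Fin 4 × Fin m) ℝ) :
    ((∃ s : ℤˣ, SignCommute s U (Jmat m)) ∧ ∃ t : ℤˣ, SignCommute t U (Kmat m)) ↔
      ∃ Y ∈ unitary (Matrix (Fin m) (Fin m) (Quaternion ℝ)),
        ∃ Z ∈ Submonoid.closure {Jmat m, Kmat m}, U = phi m Y * Z := by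
  constructor
  · rintro ⟨⟨s, hs⟩, ⟨t, ht⟩⟩
    obtain ⟨W, Z, hZ, rfl, hWJ, hWK⟩ :=
      exists_eq_mul_of_signCommute Jmat_mul_self Kmat_mul_self Jmat_mul_Kmat hs ht
    obtain ⟨Y, rfl⟩ := exists_phi_eq_of_commute hWJ hWK
    have hZ' := closure_Jmat_Kmat_le_orthogonalGroup hZ
    have hY : phi m Y = phi m Y * Z * star Z := by
      rw [mul_assoc, Unitary.mul_star_self_of_mem hZ', mul_one]
    refine ⟨Y, phi_mem_orthogonalGroup_iff.1 ?_, Z, hZ, rfl⟩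
    rw [hY]
    exact mul_mem hU (Unitary.star_mem hZ')
  · rintro ⟨Y, -, Z, hZ, rfl⟩
    have hJ : ∀ a ∈ ({Jmat m, Kmat m} : Set _), ∃ s : ℤˣ, SignCommute s a (Jmat m) := by
      rintro a (rfl | rfl)
      exacts [⟨1, signCommute_one_iff.2 (Commute.refl _)⟩,
        ⟨-1, signCommute_neg_one_iff.2 (by rw [Jmat_mul_Kmat, neg_neg])⟩]
    have hK : ∀ a ∈ ({Jmat m, Kmat m} : Set _), ∃ s : ℤˣ, SignCommute s a (Kmat m) := by
      rintro a (rfl | rfl)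
      exacts [⟨-1, signCommute_neg_one_iff.2 Jmat_mul_Kmat⟩,
        ⟨1, signCommute_one_iff.2 (Commute.refl _)⟩]
    obtain ⟨s, hs⟩ := SignCommute.exists_of_mem_closure hJ hZ
    obtain ⟨t, ht⟩ := SignCommute.exists_of_mem_closure hK hZ
    exact ⟨⟨1 * s, (signCommute_one_iff.2 (phi_commute_Jmat Y)).mul_left hs⟩,
      ⟨1 * t, (signCommute_one_iff.2 (phi_commute_Kmat Y)).mul_left ht⟩⟩

theorem mk_mem_centralizer_H2'_iff (U : OG (Fin 4 × Fin m)) :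
    (QuotientGroup.mk U : PO (Fin 4 × Fin m)) ∈ Subgroup.centralizer (H2' m : Set _) ↔
      (∃ s : ℤˣ, SignCommute s U.1 (Jmat m)) ∧
        ∃ t : ℤˣ, SignCommute t U.1 (Kmat m) := by
  rw [H2', Subgroup.centralizer_closure, Subgroup.mem_centralizer_iff]
  simp only [Set.mem_ofPred_eq, forall_exists_index, and_imp]
  constructor
  · intro h
    exact ⟨PO.commute_mk_iff.1 (h _ ⟨_, Jmat_mem_orthogonalGroup⟩ rfl (Or.inl rfl)).symm,
      PO.commute_mk_iff.1 (h _ ⟨_, Kmat_mem_orthogonalGroup⟩ rfl (Or.inr rfl)).symm⟩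
  · rintro ⟨hJ, hK⟩ _ V rfl (hV | hV)
    · exact (PO.commute_mk_iff.2 (hV ▸ hJ)).symm
    · exact (PO.commute_mk_iff.2 (hV ▸ hK)).symm

theorem centralizer_H2'_orthogonal_general (m : ℕ) :
    (∀ X ∈ unitary (Matrix (Fin m) (Fin m) (Quaternion ℝ)),
        phi m X ∈ Matrix.orthogonalGroup (Fin 4 × Fin m) ℝ) ∧
    phi m 1 = 1 ∧
    (∀ X ∈ unitary (Matrix (Fin m) (Fin m) (Quaternion ℝ)),
      ∀ Y ∈ unitary (Matrix (Fin m) (Fin m) (Quaternion ℝ)),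
        phi m (X * Y) = phi m X * phi m Y) ∧
    (∀ X ∈ unitary (Matrix (Fin m) (Fin m) (Quaternion ℝ)),
      ∀ Y ∈ unitary (Matrix (Fin m) (Fin m) (Quaternion ℝ)),
        phi m X = phi m Y → X = Y) ∧
    ((Subgroup.centralizer (H2' m : Set (PO (Fin 4 × Fin m)))) :
        Set (PO (Fin 4 × Fin m))) =
      {x | ∃ Y ∈ unitary (Matrix (Fin m) (Fin m) (Quaternion ℝ)),
        ∃ Z ∈ Submonoid.closure
            ({Jmat m, Kmat m} : Set (Matrix (Fin 4 × Fin m) (Fin 4 × Fin m) ℝ)),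
          ∃ U : OG (Fin 4 × Fin m),
            (QuotientGroup.mk U : PO (Fin 4 × Fin m)) = x ∧
            (U : Matrix (Fin 4 × Fin m) (Fin 4 × Fin m) ℝ) = phi m Y * Z} := by
  refine ⟨fun X hX => phi_mem_orthogonalGroup_iff.2 hX, phi_one, fun X _ Y _ => phi_mul X Y,
    fun _ _ _ _ h => phi_injective h, ?_⟩
  ext x
  obtain ⟨U, rfl⟩ := QuotientGroup.mk_surjective x
  simp only [SetLike.mem_coe, Set.mem_ofPred_eq]
  constructor
  · intro hU
    obtain ⟨Y, hY, Z, hZ, hUYZ⟩ :=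
      (signCommute_Jmat_Kmat_iff U.2).1 ((mk_mem_centralizer_H2'_iff U).1 hU)
    exact ⟨Y, hY, Z, hZ, U, rfl, hUYZ⟩
  · rintro ⟨Y, hY, Z, hZ, V, hVU, hV⟩
    rw [← hVU, mk_mem_centralizer_H2'_iff]
    exact (signCommute_Jmat_Kmat_iff V.2).2 ⟨Y, hY, Z, hZ, hV⟩

/-- `φ` is an injective group homomorphism `Sp(m) → O(4m)`, and the
centralizer of `H₂' = ⟨[J_{2m}], [K_m]⟩` in `O(4m)/⟨-I⟩` is
`{[φ(Y)·Z] : Y ∈ Sp(m), Z ∈ ⟨J_{2m}, K_m⟩}`, i.e. the internal product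
`φ(Sp(m)/⟨-I⟩) × H₂'`. -/
theorem centralizer_H2'_orthogonal (m : ℕ) (hm : 1 ≤ m) :
    (∀ X ∈ unitary (Matrix (Fin m) (Fin m) (Quaternion ℝ)),
        phi m X ∈ Matrix.orthogonalGroup (Fin 4 × Fin m) ℝ) ∧
    phi m 1 = 1 ∧
    (∀ X ∈ unitary (Matrix (Fin m) (Fin m) (Quaternion ℝ)),
      ∀ Y ∈ unitary (Matrix (Fin m) (Fin m) (Quaternion ℝ)),
        phi m (X * Y) = phi m X * phi m Y) ∧
    (∀ X ∈ unitary (Matrix (Fin m) (Fin m) (Quaternion ℝ)),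
      ∀ Y ∈ unitary (Matrix (Fin m) (Fin m) (Quaternion ℝ)),
        phi m X = phi m Y → X = Y) ∧
    ((Subgroup.centralizer (H2' m : Set (PO (Fin 4 × Fin m)))) :
        Set (PO (Fin 4 × Fin m))) =
      {x | ∃ Y ∈ unitary (Matrix (Fin m) (Fin m) (Quaternion ℝ)),
        ∃ Z ∈ Submonoid.closure
            ({Jmat m, Kmat m} : Set (Matrix (Fin 4 × Fin m) (Fin 4 × Fin m) ℝ)),
          ∃ U : OG (Fin 4 × Fin m),
            (QuotientGroup.mk U : PO (Fin 4 × Fin m)) = x ∧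
            (U : Matrix (Fin 4 × Fin m) (Fin 4 × Fin m) ℝ) = phi m Y * Z} :=
  centralizer_H2'_orthogonal_general m

end
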